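/- arXiv:2203.16359 — 8 statements merged into one kernel-verified Lean document; each statement's English description precedes it below -/
import Mathlib

section
/- Let G be a graph of size q admitting a local antimagic labeling f inducing exactly 2 colors x and y with x < y. Let X and Y be the sets of vertices colored x and y respectively. Then x·|X| = y·|Y| = q(q+1)/2, and |X| > |Y|. -/
open scoped BigOperators

namespace LocalAntimagic

variable {V : Type*}

/-- The size (number of edges) of a graph. -/
noncomputable def esize (G : SimpleGraph V) : ℕ := G.edgeSet.ncard

/-- The induced vertex sum `f⁺(v)`: sum of labels of edges incident to `v`. -/
noncomputable def vsum (G : SimpleGraph V) (f : Sym2 V → ℕ) (v : V) : ℕ :=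
  ∑ᶠ e ∈ G.incidenceSet v, f e

/-- `f` is a local antimagic labeling of `G`: a bijection from the edge set onto
`{1, …, q}` such that adjacent vertices get distinct induced sums. -/
def IsLocalAntimagic (G : SimpleGraph V) (f : Sym2 V → ℕ) : Prop :=
  Set.BijOn f G.edgeSet (Set.Icc 1 (esize G)) ∧
    ∀ ⦃u v : V⦄, G.Adj u v → vsum G f u ≠ vsum G f v

/-- The number of distinct induced vertex colors of the labeling `f`. -/
noncomputable def colors (G : SimpleGraph V) (f : Sym2 V → ℕ) : ℕ :=
  (Set.range (vsum G f)).ncard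

/-- The local antimagic chromatic number `χ_la(G)`. -/
noncomputable def chiLA (G : SimpleGraph V) : ℕ :=
  sInf {c | ∃ f : Sym2 V → ℕ, IsLocalAntimagic G f ∧ colors G f = c}

end LocalAntimagic
open LocalAntimagic Finset

section Aux
variable {V : Type*} [Fintype V] (G : SimpleGraph V) (f : Sym2 V → ℕ)

lemma vsum_eq [DecidableEq V] (hEf : G.edgeSet.Finite) (v : V) :
    vsum G f v = ∑ e ∈ hEf.toFinset.filter (fun e => v ∈ e), f e := by
  rw [vsum, ← finsum_mem_coe_finset]
  congr 1
  ext e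
  simp [SimpleGraph.incidenceSet, hEf.mem_toFinset]

/-- If every edge has a unique endpoint of color `c`, then the sum of `vsum` over the class
of color `c` is the total edge-label sum. -/
lemma class_sum [DecidableEq V] (hEf : G.edgeSet.Finite) (c : ℕ)
    (huniq : ∀ e ∈ G.edgeSet, (Finset.univ.filter
      (fun w => vsum G f w = c ∧ w ∈ e)).card = 1) :
    c * {v : V | vsum G f v = c}.ncard = ∑ e ∈ hEf.toFinset, f e := by
  classical
  have hX : {v : V | vsum G f v = c}.ncard
      = (Finset.univ.filter (fun v => vsum G f v = c)).card := by
    rw [Set.ncard_eq_toFinset_card']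
    congr 1
    ext v; simp
  rw [hX]
  have : c * (Finset.univ.filter (fun v => vsum G f v = c)).card
      = ∑ v ∈ Finset.univ.filter (fun v => vsum G f v = c), vsum G f v := by
    rw [Finset.sum_congr rfl (fun v hv => (Finset.mem_filter.mp hv).2),
      Finset.sum_const, smul_eq_mul, mul_comm]
  rw [this]
  calc ∑ v ∈ Finset.univ.filter (fun v => vsum G f v = c), vsum G f v
      = ∑ v ∈ Finset.univ.filter (fun v => vsum G f v = c),
          ∑ e ∈ hEf.toFinset, if v ∈ e then f e else 0 := by
        refine Finset.sum_congr rfl fun v _ => ?_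
        rw [vsum_eq G f hEf v, Finset.sum_filter]
    _ = ∑ e ∈ hEf.toFinset, ∑ v ∈ Finset.univ.filter (fun v => vsum G f v = c),
          if v ∈ e then f e else 0 := Finset.sum_comm
    _ = ∑ e ∈ hEf.toFinset, f e := by
        refine Finset.sum_congr rfl fun e he => ?_
        rw [← Finset.sum_filter, Finset.sum_const, Finset.filter_filter]
        have := huniq e (hEf.mem_toFinset.mp he)
        simp only [this, one_smul]

end Aux

open LocalAntimagic in
/-- If a local antimagic labeling of `G` (of size `q`) induces exactly the two
colors `x < y`, with color classes `X` and `Y`, then `x·|X| = y·|Y| = q(q+1)/2` and `|X| > |Y|`. -/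
theorem stmt0 {V : Type*} [Fintype V] (G : SimpleGraph V) (hconn : G.Connected)
    (f : Sym2 V → ℕ) (hf : IsLocalAntimagic G f) (x y : ℕ) (hxy : x < y)
    (hcol : ∀ v : V, vsum G f v = x ∨ vsum G f v = y)
    (hx : ∃ v : V, vsum G f v = x) (hy : ∃ v : V, vsum G f v = y) :
    x * {v : V | vsum G f v = x}.ncard = esize G * (esize G + 1) / 2 ∧
    y * {v : V | vsum G f v = y}.ncard = esize G * (esize G + 1) / 2 ∧
    {v : V | vsum G f v = y}.ncard < {v : V | vsum G f v = x}.ncard := by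
  classical
  have hEf : G.edgeSet.Finite := Set.toFinite _
  set q := esize G with hq
  -- edge labels sum
  have hcard : hEf.toFinset.card = q := by
    rw [hq, esize, Set.ncard_eq_toFinset_card _ hEf]
  have hsum : (∑ e ∈ hEf.toFinset, f e) = ∑ i ∈ Finset.Icc 1 q, i := by
    refine Finset.sum_bij (fun e _ => f e) ?_ ?_ ?_ ?_
    · intro e he
      simpa using hf.1.1 (hEf.mem_toFinset.mp he)
    · intro a ha b hb hab
      exact hf.1.2.1 (hEf.mem_toFinset.mp ha) (hEf.mem_toFinset.mp hb) hab
    · intro b hb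
      obtain ⟨a, ha, rfl⟩ := hf.1.2.2 (by simpa using hb)
      exact ⟨a, hEf.mem_toFinset.mpr ha, rfl⟩
    · intro a _; rfl
  have hgauss : (∑ e ∈ hEf.toFinset, f e) * 2 = q * (q + 1) := by
    rw [hsum]
    have hins : Finset.range (q + 1) = insert 0 (Finset.Icc 1 q) := by
      ext i; simp [Nat.lt_succ_iff]; omega
    have h2 := Finset.sum_range_id_mul_two (q + 1)
    rw [hins, Finset.sum_insert (by simp)] at h2
    simp only [Nat.add_sub_cancel, zero_add] at h2
    rw [mul_comm q]
    exact h2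
  -- each edge has exactly one endpoint of each color
  have key : ∀ c c' : ℕ, c ≠ c' → (∀ v : V, vsum G f v = c ∨ vsum G f v = c') →
      ∀ e ∈ G.edgeSet, (Finset.univ.filter
        (fun w => vsum G f w = c ∧ w ∈ e)).card = 1 := by
    intro c c' hcc hcol' e he
    induction e with
    | h u v =>
      have hadj : G.Adj u v := he
      have hne : vsum G f u ≠ vsum G f v := hf.2 hadj
      have huv : u ≠ v := hadj.ne
      rw [Finset.card_eq_one]
      rcases hcol' u with hu | hu
      · refine ⟨u, ?_⟩
        ext w
        simp only [Finset.mem_filter, Finset.mem_univ, true_and, Finset.mem_singleton,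
          Sym2.mem_iff]
        constructor
        · rintro ⟨hw, rfl | rfl⟩
          · rfl
          · exact absurd (hu.trans hw.symm) hne
        · rintro rfl; exact ⟨hu, Or.inl rfl⟩
      · have hv : vsum G f v = c := by
          rcases hcol' v with h | h
          · exact h
          · exact absurd (hu.trans h.symm) hne
        refine ⟨v, ?_⟩
        ext w
        simp only [Finset.mem_filter, Finset.mem_univ, true_and, Finset.mem_singleton,
          Sym2.mem_iff]
        constructor
        · rintro ⟨hw, rfl | rfl⟩
          · exact absurd (hu.symm.trans hw) hcc.symm
          · rfl
        · rintro rfl; exact ⟨hv, Or.inr rfl⟩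
  have hXs : x * {v : V | vsum G f v = x}.ncard = ∑ e ∈ hEf.toFinset, f e :=
    class_sum G f hEf x (key x y hxy.ne hcol)
  have hYs : y * {v : V | vsum G f v = y}.ncard = ∑ e ∈ hEf.toFinset, f e :=
    class_sum G f hEf y (key y x hxy.ne' (fun v => (hcol v).symm))
  -- q ≥ 1
  have hqpos : 0 < q := by
    by_contra h
    push_neg at h
    interval_cases q
    have hempty : hEf.toFinset = ∅ := Finset.card_eq_zero.mp hcard
    have hzero : ∀ v, vsum G f v = 0 := by
      intro v
      rw [vsum_eq G f hEf v, hempty]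
      simp
    obtain ⟨u, hu⟩ := hx
    obtain ⟨v, hv⟩ := hy
    rw [hzero u] at hu
    rw [hzero v] at hv
    omega
  have hdiv : q * (q + 1) / 2 = ∑ e ∈ hEf.toFinset, f e := by omega
  have hXeq : x * {v : V | vsum G f v = x}.ncard = q * (q + 1) / 2 := by rw [hXs, hdiv]
  have hYeq : y * {v : V | vsum G f v = y}.ncard = q * (q + 1) / 2 := by rw [hYs, hdiv]
  refine ⟨hXeq, hYeq, ?_⟩
  have hTpos : 0 < q * (q + 1) / 2 := by
    have : 2 ≤ q * (q + 1) := by nlinarith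
    omega
  have hA : 0 < {v : V | vsum G f v = x}.ncard := by
    rcases Nat.eq_zero_or_pos {v : V | vsum G f v = x}.ncard with h | h
    · rw [h, mul_zero] at hXeq; omega
    · exact h
  have h1 : x * {v : V | vsum G f v = x}.ncard < y * {v : V | vsum G f v = x}.ncard :=
    mul_lt_mul_of_pos_right hxy hA
  have h2 : y * {v : V | vsum G f v = y}.ncard < y * {v : V | vsum G f v = x}.ncard := by
    rw [hYeq, ← hXeq]; exact h1
  exact Nat.lt_of_mul_lt_mul_left h2
end

section
/- Suppose G is a connected bipartite graph with q edges and bipartition (V₁, V₂). If G admits a local antimagic labeling inducing exactly 2 colors, then |V₁| ≠ |V₂|, and both |V₁| and |V₂| divide q(q+1)/2. -/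
open scoped BigOperators

section Aux
open LocalAntimagic

variable {V : Type*} [Fintype V]

lemma vsum_eq_sum (G : SimpleGraph V) (f : Sym2 V → ℕ) (v : V) :
    vsum G f v = ∑ e ∈ (G.incidenceSet v).toFinite.toFinset, f e :=
  finsum_mem_eq_finite_toFinset_sum _ _

lemma gauss (q : ℕ) : 2 * ∑ i ∈ Finset.Icc 1 q, i = q * (q + 1) := by
  induction q with
  | zero => simp
  | succ n ih =>
      rw [Finset.sum_Icc_succ_top (by omega)]
      have : (n + 1) * (n + 1 + 1) = n * (n + 1) + 2 * (n + 1) := by ring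
      omega

/-- Double counting: sum of vertex sums over one side of a bipartition equals
the sum of all edge labels. -/
lemma sum_part (G : SimpleGraph V) (f : Sym2 V → ℕ) (P : Set V)
    (hP : ∀ x y, G.Adj x y → (x ∈ P ↔ y ∉ P)) :
    ∑ v ∈ P.toFinite.toFinset, vsum G f v = ∑ e ∈ G.edgeSet.toFinite.toFinset, f e := by
  classical
  have hinc : ∀ v : V, (G.incidenceSet v).toFinite.toFinset
      = (G.edgeSet.toFinite.toFinset).filter (v ∈ ·) := by
    intro v
    ext e
    simp only [Set.Finite.mem_toFinset, Finset.mem_filter, SimpleGraph.incidenceSet,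
      Set.mem_sep_iff]
  calc ∑ v ∈ P.toFinite.toFinset, vsum G f v
      = ∑ v ∈ P.toFinite.toFinset, ∑ e ∈ G.edgeSet.toFinite.toFinset,
          (if v ∈ e then f e else 0) := by
        refine Finset.sum_congr rfl fun v _ => ?_
        rw [vsum_eq_sum, hinc v, Finset.sum_filter]
    _ = ∑ e ∈ G.edgeSet.toFinite.toFinset, ∑ v ∈ P.toFinite.toFinset,
          (if v ∈ e then f e else 0) := Finset.sum_comm
    _ = ∑ e ∈ G.edgeSet.toFinite.toFinset, f e := by
        refine Finset.sum_congr rfl fun e he => ?_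
        rw [← Finset.sum_filter]
        induction e using Sym2.ind with
        | _ x y =>
          rw [Set.Finite.mem_toFinset, SimpleGraph.mem_edgeSet] at he
          have hxy := hP x y he
          by_cases hx : x ∈ P
          · have : (P.toFinite.toFinset).filter (· ∈ s(x, y)) = {x} := by
              ext z
              simp only [Finset.mem_filter, Set.Finite.mem_toFinset, Sym2.mem_iff,
                Finset.mem_singleton]
              constructor
              · rintro ⟨hz, rfl | rfl⟩
                · rfl
                · exact absurd hz (hxy.mp hx)
              · rintro rfl; exact ⟨hx, Or.inl rfl⟩
            rw [this, Finset.sum_singleton]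
          · have hy : y ∈ P := by
              by_contra hy
              exact hx (hxy.mpr hy)
            have : (P.toFinite.toFinset).filter (· ∈ s(x, y)) = {y} := by
              ext z
              simp only [Finset.mem_filter, Set.Finite.mem_toFinset, Sym2.mem_iff,
                Finset.mem_singleton]
              constructor
              · rintro ⟨hz, rfl | rfl⟩
                · exact absurd hz hx
                · rfl
              · rintro rfl; exact ⟨hy, Or.inr rfl⟩
            rw [this, Finset.sum_singleton]

omit [Fintype V] in
/-- Along any walk in a bipartite graph with only two induced colors,
the color is determined by the side of the bipartition. -/
lemma walk_alt (G : SimpleGraph V) (V1 V2 : Set V)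
    (hcompl : ∀ x : V, x ∈ V2 ↔ x ∉ V1)
    (hbip : ∀ u v : V, G.Adj u v → (u ∈ V1 ↔ v ∈ V2))
    (f : Sym2 V → ℕ)
    (hadj : ∀ ⦃u v : V⦄, G.Adj u v → vsum G f u ≠ vsum G f v)
    (htwo : ∀ x y z : V, vsum G f x ≠ vsum G f y →
      vsum G f z = vsum G f x ∨ vsum G f z = vsum G f y)
    {u v : V} (p : G.Walk u v) :
    (u ∈ V1 → v ∈ V1 → vsum G f u = vsum G f v) ∧
    (u ∈ V2 → v ∈ V2 → vsum G f u = vsum G f v) ∧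
    (u ∈ V1 → v ∈ V2 → vsum G f u ≠ vsum G f v) ∧
    (u ∈ V2 → v ∈ V1 → vsum G f u ≠ vsum G f v) := by
  induction p with
  | nil =>
      refine ⟨fun _ _ => rfl, fun _ _ => rfl, fun h1 h2 => absurd h1 ((hcompl _).mp h2), 
        fun h2 h1 => absurd h1 ((hcompl _).mp h2)⟩
  | @cons u w v h p ih =>
      have huw := hadj h
      have hm : u ∈ V1 ↔ w ∈ V2 := hbip u w h
      refine ⟨?_, ?_, ?_, ?_⟩
      · intro hu hv
        have hw : w ∈ V2 := hm.mp hu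
        have hne : vsum G f w ≠ vsum G f v := ih.2.2.2 hw hv
        rcases htwo u w v huw with h' | h'
        · exact h'.symm
        · exact absurd h'.symm hne
      · intro hu hv
        have hw : w ∈ V1 := by
          by_contra hw
          exact ((hcompl u).mp hu) (hm.mpr ((hcompl w).mpr hw))
        have hne : vsum G f w ≠ vsum G f v := ih.2.2.1 hw hv
        rcases htwo u w v huw with h' | h'
        · exact h'.symm
        · exact absurd h'.symm hne
      · intro hu hv
        have hw : w ∈ V2 := hm.mp hu
        have heq : vsum G f w = vsum G f v := ih.2.1 hw hv
        rw [← heq]; exact huw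
      · intro hu hv
        have hw : w ∈ V1 := by
          by_contra hw
          exact ((hcompl u).mp hu) (hm.mpr ((hcompl w).mpr hw))
        have heq : vsum G f w = vsum G f v := ih.1 hw hv
        rw [← heq]; exact huw

end Aux
open LocalAntimagic in
/-- If a connected bipartite graph `G` with `q` edges and bipartition `(V₁, V₂)`
admits a local antimagic labeling inducing exactly 2 colors, then `|V₁| ≠ |V₂|` and both
`|V₁|` and `|V₂|` divide `q(q+1)/2`. -/
theorem stmt2 {V : Type*} [Fintype V] (G : SimpleGraph V) (hconn : G.Connected)
    (V1 V2 : Set V) (hU : V1 ∪ V2 = Set.univ) (hdisj : Disjoint V1 V2)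
    (hbip : ∀ u v : V, G.Adj u v → (u ∈ V1 ↔ v ∈ V2))
    (f : Sym2 V → ℕ) (hf : IsLocalAntimagic G f) (h2 : colors G f = 2) :
    V1.ncard ≠ V2.ncard ∧ V1.ncard ∣ esize G * (esize G + 1) / 2 ∧
      V2.ncard ∣ esize G * (esize G + 1) / 2 := by
  classical
  obtain ⟨hbij, hadj⟩ := hf
  set q := esize G with hq
  -- the two color values
  obtain ⟨a, b, hab, hr⟩ := Set.ncard_eq_two.mp h2
  have hmem : ∀ x : V, vsum G f x = a ∨ vsum G f x = b := by
    intro x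
    have hx : vsum G f x ∈ Set.range (vsum G f) := ⟨x, rfl⟩
    rw [hr] at hx
    simpa using hx
  have htwo : ∀ x y z : V, vsum G f x ≠ vsum G f y →
      vsum G f z = vsum G f x ∨ vsum G f z = vsum G f y := by
    intro x y z hxy
    rcases hmem x with hx | hx <;> rcases hmem y with hy | hy <;>
      rcases hmem z with hz | hz <;> simp_all
  -- basic bipartition facts
  have hall : ∀ x : V, x ∈ V1 ∨ x ∈ V2 := by
    intro x
    have : x ∈ V1 ∪ V2 := hU ▸ Set.mem_univ x
    exact this
  have hcompl : ∀ x : V, x ∈ V2 ↔ x ∉ V1 := by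
    intro x
    constructor
    · intro h2x h1x
      exact Set.disjoint_left.mp hdisj h1x h2x
    · intro h1x
      rcases hall x with h | h
      · exact absurd h h1x
      · exact h
  -- there is at least one edge
  have hne : G.edgeSet.Nonempty := by
    by_contra hcon
    rw [Set.not_nonempty_iff_eq_empty] at hcon
    have hz : ∀ v : V, vsum G f v = 0 := by
      intro v
      rw [vsum_eq_sum]
      have : G.incidenceSet v = ∅ := by
        have := G.incidenceSet_subset v
        rw [hcon] at this
        exact Set.eq_empty_of_subset_empty this
      rw [Set.Finite.toFinset_eq_empty.mpr this, Finset.sum_empty]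
    have hsub : Set.range (vsum G f) ⊆ {0} := by
      rintro _ ⟨x, rfl⟩
      simp [hz x]
    have : (Set.range (vsum G f)).ncard ≤ 1 := by
      have h1 : ({0} : Set ℕ).ncard = 1 := Set.ncard_singleton 0
      have := Set.ncard_le_ncard hsub (Set.finite_singleton 0)
      omega
    have h2' : (Set.range (vsum G f)).ncard = 2 := h2
    omega
  -- pick adjacent u0 ∈ V1, w0 ∈ V2
  obtain ⟨x, y, hxy⟩ : ∃ x y : V, G.Adj x y := by
    obtain ⟨e, he⟩ := hne
    induction e using Sym2.ind with
    | _ x y => exact ⟨x, y, he⟩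
  obtain ⟨u0, w0, hu0w0, hu0, hw0⟩ :
      ∃ u0 w0 : V, G.Adj u0 w0 ∧ u0 ∈ V1 ∧ w0 ∈ V2 := by
    rcases hall x with hx | hx
    · exact ⟨x, y, hxy, hx, (hbip x y hxy).mp hx⟩
    · have hx1 : x ∉ V1 := (hcompl x).mp hx
      have hy2 : y ∉ V2 := fun h => hx1 ((hbip x y hxy).mpr h)
      have hy1 : y ∈ V1 := by
        rcases hall y with h | h
        · exact h
        · exact absurd h hy2
      exact ⟨y, x, hxy.symm, hy1, hx⟩
  set A := vsum G f u0 with hA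
  set B := vsum G f w0 with hB
  have hAB : A ≠ B := hadj hu0w0
  -- all of V1 has color A, all of V2 has color B
  have hV1val : ∀ v ∈ V1, vsum G f v = A := by
    intro v hv
    have p : G.Walk u0 v := (hconn.preconnected u0 v).some
    exact ((walk_alt G V1 V2 hcompl hbip f hadj htwo p).1 hu0 hv).symm
  have hV2val : ∀ v ∈ V2, vsum G f v = B := by
    intro v hv
    have p : G.Walk w0 v := (hconn.preconnected w0 v).some
    exact ((walk_alt G V1 V2 hcompl hbip f hadj htwo p).2.1 hw0 hv).symm
  -- the total sum S
  set E := G.edgeSet.toFinite.toFinset with hE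
  set S := ∑ e ∈ E, f e with hS
  -- S = q(q+1)/2  (via 2S = q(q+1))
  have hqE : q = E.card := by
    rw [hq]
    exact Set.ncard_eq_toFinset_card _ _
  have hSsum : S = ∑ i ∈ Finset.Icc 1 q, i := by
    refine Finset.sum_nbij f ?_ ?_ ?_ ?_
    · intro e he
      rw [Set.Finite.mem_toFinset] at he
      have := hbij.1 he
      rw [Set.mem_Icc] at this
      rw [Finset.mem_Icc]
      exact this
    · intro e he e' he' hee
      rw [Finset.mem_coe, Set.Finite.mem_toFinset] at he he'
      exact hbij.2.1 he he' hee
    · intro i hi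
      rw [Finset.coe_Icc] at hi
      obtain ⟨e, he, hfe⟩ := hbij.2.2 hi
      exact ⟨e, by rwa [Finset.mem_coe, Set.Finite.mem_toFinset], hfe⟩
    · intro e _
      rfl
  have h2S : 2 * S = q * (q + 1) := by rw [hSsum]; exact gauss q
  -- sums over each side
  have hS1 : V1.ncard * A = S := by
    have := sum_part G f V1 (fun x y hxy' => by
      rw [hbip x y hxy', hcompl y])
    rw [hS, hE, ← this]
    rw [Finset.sum_congr rfl (fun v hv => hV1val v (V1.toFinite.mem_toFinset.mp hv))]
    rw [Finset.sum_const, smul_eq_mul, Set.ncard_eq_toFinset_card _ V1.toFinite]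
  have hS2 : V2.ncard * B = S := by
    have hP : ∀ x y : V, G.Adj x y → (x ∈ V2 ↔ y ∉ V2) := by
      intro x y hxy'
      have h1 := hbip y x hxy'.symm
      have h2 := hcompl x
      have h3 := hcompl y
      tauto
    have := sum_part G f V2 hP
    rw [hS, hE, ← this]
    rw [Finset.sum_congr rfl (fun v hv => hV2val v (V2.toFinite.mem_toFinset.mp hv))]
    rw [Finset.sum_const, smul_eq_mul, Set.ncard_eq_toFinset_card _ V2.toFinite]
  -- S is positive
  have hq1 : 1 ≤ q := by
    have : E.Nonempty := by
      obtain ⟨e, he⟩ := hne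
      exact ⟨e, (Set.Finite.mem_toFinset _).mpr he⟩
    rw [hqE]
    exact Finset.card_pos.mpr this
  have hSpos : 0 < S := by nlinarith
  have hdiv : q * (q + 1) / 2 = S := by omega
  refine ⟨?_, ?_, ?_⟩
  · intro hcard
    have hn1 : 0 < V1.ncard := by
      rw [Set.ncard_pos (Set.toFinite V1)]
      exact ⟨u0, hu0⟩
    have : A = B := by
      have h1 : V1.ncard * A = V1.ncard * B := by rw [hS1, hcard, hS2]
      exact Nat.eq_of_mul_eq_mul_left hn1 h1
    exact hAB this
  · exact ⟨A, by rw [hdiv, ← hS1]⟩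
  · exact ⟨B, by rw [hdiv, ← hS2]⟩
end

section
/- Let G be a regular graph of size q that admits a local antimagic labeling f attaining χ_la(G) colors, and suppose f(e) = q for some edge e. Then χ_la(G − e) ≤ χ_la(G). -/
open scoped BigOperators

section Aux

variable {α : Type*}

lemma aux_finsum_sub (s : Set α) (hs : s.Finite) (q : ℕ) (f : α → ℕ)
    (h : ∀ x ∈ s, f x ≤ q) :
    (∑ᶠ x ∈ s, (q - f x)) + ∑ᶠ x ∈ s, f x = s.ncard * q := by
  classical
  have h1 : ∑ᶠ x ∈ s, f x = ∑ x ∈ hs.toFinset, f x := by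
    rw [← finsum_mem_coe_finset, hs.coe_toFinset]
  have h2 : ∑ᶠ x ∈ s, (q - f x) = ∑ x ∈ hs.toFinset, (q - f x) := by
    rw [← finsum_mem_coe_finset, hs.coe_toFinset]
  have hcard : s.ncard = hs.toFinset.card := Set.ncard_eq_toFinset_card s hs
  rw [h1, h2, hcard, ← Finset.sum_add_distrib]
  have : ∀ x ∈ hs.toFinset, q - f x + f x = q := fun x hx =>
    Nat.sub_add_cancel (h x (hs.mem_toFinset.mp hx))
  rw [Finset.sum_congr rfl this, Finset.sum_const, smul_eq_mul]

lemma aux_incidenceSet_deleteEdges (G : SimpleGraph V) (s : Set (Sym2 V)) (v : V) :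
    (G.deleteEdges s).incidenceSet v = G.incidenceSet v \ s := by
  ext x
  simp only [SimpleGraph.incidenceSet, SimpleGraph.edgeSet_deleteEdges, Set.mem_diff,
    Set.mem_setOf_eq, Set.sep_setOf]
  tauto

end Aux

open LocalAntimagic in
/-- If `G` is regular of size `q`, `f` is a local antimagic labeling of `G`
attaining `χ_la(G)` colors and `f(e) = q` for some edge `e`, then `χ_la(G - e) ≤ χ_la(G)`. -/
theorem stmt4 {V : Type*} [Fintype V] (G : SimpleGraph V) (d : ℕ)
    (hreg : ∀ v : V, (G.neighborSet v).ncard = d)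
    (f : Sym2 V → ℕ) (hf : IsLocalAntimagic G f) (hopt : colors G f = chiLA G)
    (e : Sym2 V) (he : e ∈ G.edgeSet) (hfe : f e = esize G) :
    chiLA (G.deleteEdges {e}) ≤ chiLA G := by
  classical
  obtain ⟨hbij, hadjf⟩ := hf
  set q := esize G with hq
  set G' := G.deleteEdges {e} with hG'
  have hfin : G.edgeSet.Finite := Set.toFinite _
  have hES : G'.edgeSet = G.edgeSet \ {e} := SimpleGraph.edgeSet_deleteEdges _
  have hq1 : 1 ≤ q := by
    have := (hbij.mapsTo he)
    exact this.1.trans (this.2)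
  have hsize' : esize G' = q - 1 := by
    rw [esize, hES, Set.ncard_diff_singleton_of_mem he]
    rfl
  set g : Sym2 V → ℕ := fun x => q - f x with hg
  have hfb : ∀ x ∈ G.edgeSet, 1 ≤ f x ∧ f x ≤ q := fun x hx =>
    ⟨(hbij.mapsTo hx).1, (hbij.mapsTo hx).2⟩
  -- degree of incidence set
  have hdeg : ∀ v : V, (G.incidenceSet v).ncard = d := by
    intro v
    rw [← hreg v, ← Nat.card_coe_set_eq, ← Nat.card_coe_set_eq]
    exact Nat.card_congr (G.incidenceSetEquivNeighborSet v)
  -- key: vsum of g on G' is d*q - vsum of f on G, and vsum of f ≤ d*q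
  have key : ∀ v : V, vsum G' g v = d * q - vsum G f v ∧ vsum G f v ≤ d * q := by
    intro v
    have hfinI : (G.incidenceSet v).Finite := Set.toFinite _
    have hle : ∀ x ∈ G.incidenceSet v, f x ≤ q := fun x hx =>
      (hfb x (G.incidenceSet_subset v hx)).2
    have hsum := aux_finsum_sub _ hfinI q f hle
    rw [hdeg v] at hsum
    have hvs : vsum G f v = ∑ᶠ x ∈ G.incidenceSet v, f x := rfl
    have h1 : vsum G' g v = ∑ᶠ x ∈ G.incidenceSet v \ {e}, g x := by
      rw [vsum, hG', aux_incidenceSet_deleteEdges]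
    have h2 : ∑ᶠ x ∈ G.incidenceSet v \ {e}, g x = ∑ᶠ x ∈ G.incidenceSet v, g x := by
      calc ∑ᶠ x ∈ G.incidenceSet v \ {e}, g x
          = ∑ x ∈ hfinI.toFinset.erase e, g x := by
            rw [← finsum_mem_coe_finset]
            congr 1
            rw [Finset.coe_erase, hfinI.coe_toFinset]
        _ = ∑ x ∈ hfinI.toFinset, g x := Finset.sum_erase _ (by simp [hg, hfe])
        _ = ∑ᶠ x ∈ G.incidenceSet v, g x := by
            rw [← finsum_mem_coe_finset, hfinI.coe_toFinset]
    have h3 : ∑ᶠ x ∈ G.incidenceSet v, g x = ∑ᶠ x ∈ G.incidenceSet v, (q - f x) := by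
      simp only [hg]
    rw [← hvs] at hsum
    constructor
    · rw [h1, h2, h3]; omega
    · omega
  -- g is a local antimagic labeling of G'
  have hIs : IsLocalAntimagic G' g := by
    constructor
    · rw [hsize']
      refine ⟨?_, ?_, ?_⟩
      · intro x hx
        rw [hES] at hx
        obtain ⟨hx1, hx2⟩ := hx
        have hb := hfb x hx1
        have hne : f x ≠ q := by
          intro hcontra
          exact hx2 (hbij.injOn hx1 he (by rw [hcontra, hfe]))
        constructor <;> simp only [hg] <;> omega
      · intro x hx y hy hxy
        rw [hES] at hx hy
        have hbx := hfb x hx.1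
        have hby := hfb y hy.1
        have : f x = f y := by simp only [hg] at hxy; omega
        exact hbij.injOn hx.1 hy.1 this
      · intro m hm
        obtain ⟨hm1, hm2⟩ := hm
        have hmem : q - m ∈ Set.Icc 1 q := by constructor <;> omega
        obtain ⟨x, hx, hfx⟩ := hbij.surjOn hmem
        refine ⟨x, ?_, ?_⟩
        · rw [hES]
          refine ⟨hx, ?_⟩
          intro hcontra
          rw [Set.mem_singleton_iff] at hcontra
          rw [hcontra, hfe] at hfx
          omega
        · simp only [hg, hfx]; omega
    · intro u w hadj
      rw [hG', SimpleGraph.deleteEdges_adj] at hadj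
      have hne := hadjf hadj.1
      have ku := key u
      have kw := key w
      omega
  -- colors of g on G' ≤ colors of f on G
  have hcomp : vsum G' g = (fun t => d * q - t) ∘ vsum G f := by
    funext v
    exact (key v).1
  have hcolors : colors G' g ≤ colors G f := by
    rw [colors, colors, hcomp, Set.range_comp]
    exact Set.ncard_image_le (Set.finite_range _)
  calc chiLA G' ≤ colors G' g := Nat.sInf_le ⟨g, hIs, rfl⟩
    _ ≤ colors G f := hcolors
    _ = chiLA G := hopt
end

section
/- For any cycle C_n (n ≥ 3), there exists a local antimagic labeling f of C_n = x₁x₂⋯x_n x₁ such that f⁺(x₁) = 2n − ⌊n/2⌋, f⁺(x_i) = n for odd i ≠ 1, and f⁺(x_i) = n + 1 for even i, and moreover f(x₁x₂) = n. -/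
open scoped BigOperators

/-- The cycle `C_n` on vertex set `ZMod n`, with `i` adjacent to `i ± 1`. -/
def cycleGraph (n : ℕ) : SimpleGraph (ZMod n) :=
  SimpleGraph.fromRel (fun i j => i = j + 1)

/-! ### Auxiliary construction -/

/-- The label of the `i`-th edge, for `1 ≤ i ≤ n`. -/
def cycLab (n i : ℕ) : ℕ := if i % 2 = 1 then n - (i - 1) / 2 else i / 2

/-- The label assigned to the edge `{a, a+1}` of the cycle. -/
def cycLabZ (n : ℕ) (a : ZMod n) : ℕ := cycLab n (if a.val = 0 then n else a.val)

/-- The edge labeling as a function on `Sym2 (ZMod n)`. -/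
def cycF (n : ℕ) : Sym2 (ZMod n) → ℕ :=
  Sym2.lift ⟨fun u v => (if v = u + 1 then cycLabZ n u else 0) +
    (if u = v + 1 then cycLabZ n v else 0), fun u v => by dsimp; exact add_comm _ _⟩

section Lemmas

variable {n : ℕ}

lemma cyc_two_ne_zero (hn : 3 ≤ n) : (2 : ZMod n) ≠ 0 := by
  have : ((2 : ℕ) : ZMod n) ≠ 0 := by
    rw [Ne, ZMod.natCast_eq_zero_iff]
    intro h
    exact absurd (Nat.le_of_dvd (by norm_num) h) (by omega)
  simpa using this

lemma cyc_one_ne_zero (hn : 3 ≤ n) : (1 : ZMod n) ≠ 0 := by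
  have : ((1 : ℕ) : ZMod n) ≠ 0 := by
    rw [Ne, ZMod.natCast_eq_zero_iff]
    intro h
    exact absurd (Nat.le_of_dvd (by norm_num) h) (by omega)
  simpa using this

lemma cyc_ne_add_one (hn : 3 ≤ n) (a : ZMod n) : a ≠ a + 1 := fun h =>
  cyc_one_ne_zero hn (by linear_combination -h)

lemma cycF_edge (hn : 3 ≤ n) (a : ZMod n) : cycF n s(a, a + 1) = cycLabZ n a := by
  have h2 : a ≠ a + 1 + 1 := fun h => cyc_two_ne_zero hn (by linear_combination -h)
  simp [cycF, h2]

lemma cyc_adj {u v : ZMod n} : (cycleGraph n).Adj u v ↔ u ≠ v ∧ (u = v + 1 ∨ v = u + 1) := by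
  simp [cycleGraph]

lemma adj_succ (hn : 3 ≤ n) (a : ZMod n) : (cycleGraph n).Adj a (a + 1) :=
  cyc_adj.mpr ⟨cyc_ne_add_one hn a, Or.inr rfl⟩

lemma cyc_edgeSet (hn : 3 ≤ n) :
    (cycleGraph n).edgeSet = Set.range (fun a : ZMod n => s(a, a + 1)) := by
  ext e
  induction e using Sym2.ind with
  | _ a b =>
    rw [SimpleGraph.mem_edgeSet, cyc_adj]
    constructor
    · rintro ⟨hne, h | h⟩
      · exact ⟨b, by dsimp only; rw [← h, Sym2.eq_swap]⟩
      · exact ⟨a, by dsimp only; rw [← h]⟩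
    · rintro ⟨c, hc⟩
      dsimp only at hc
      rw [Sym2.eq_iff] at hc
      have h1 := cyc_ne_add_one hn c
      rcases hc with ⟨rfl, rfl⟩ | ⟨rfl, rfl⟩
      · exact ⟨h1, Or.inr rfl⟩
      · exact ⟨h1.symm, Or.inl rfl⟩

lemma cyc_incidence (hn : 3 ≤ n) (v : ZMod n) :
    (cycleGraph n).incidenceSet v = {s(v, v + 1), s(v - 1, v)} := by
  ext e
  induction e using Sym2.ind with
  | _ a b =>
    rw [SimpleGraph.mk'_mem_incidenceSet_iff, cyc_adj]
    simp only [Set.mem_insert_iff, Set.mem_singleton_iff, Sym2.eq_iff]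
    constructor
    · rintro ⟨⟨hne, h | h⟩, hv | hv⟩
      · exact Or.inr (Or.inr ⟨hv.symm, by linear_combination -h - hv⟩)
      · exact Or.inl (Or.inr ⟨by linear_combination h - hv, hv.symm⟩)
      · exact Or.inl (Or.inl ⟨hv.symm, by linear_combination h - hv⟩)
      · exact Or.inr (Or.inl ⟨by linear_combination -h - hv, hv.symm⟩)
    · rintro ((⟨ha, hb⟩ | ⟨ha, hb⟩) | (⟨ha, hb⟩ | ⟨ha, hb⟩))
      · refine ⟨⟨?_, Or.inr (by linear_combination hb - ha)⟩, Or.inl ha.symm⟩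
        intro h
        exact cyc_one_ne_zero hn (by linear_combination ha - hb - h)
      · refine ⟨⟨?_, Or.inl (by linear_combination ha - hb)⟩, Or.inr hb.symm⟩
        intro h
        exact cyc_one_ne_zero hn (by linear_combination hb - ha + h)
      · refine ⟨⟨?_, Or.inr (by linear_combination hb - ha)⟩, Or.inr hb.symm⟩
        intro h
        exact cyc_one_ne_zero hn (by linear_combination ha - hb - h)
      · refine ⟨⟨?_, Or.inl (by linear_combination ha - hb)⟩, Or.inl ha.symm⟩
        intro h
        exact cyc_one_ne_zero hn (by linear_combination hb - ha + h)

open LocalAntimagic in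
lemma cyc_vsum (hn : 3 ≤ n) (v : ZMod n) :
    vsum (cycleGraph n) (cycF n) v = cycLabZ n (v - 1) + cycLabZ n v := by
  have hne : s(v, v + 1) ≠ s(v - 1, v) := by
    rw [Ne, Sym2.eq_iff]
    rintro (⟨h1, h2⟩ | ⟨h1, h2⟩)
    · exact cyc_one_ne_zero hn (by linear_combination h1)
    · exact cyc_two_ne_zero hn (by linear_combination h2 - h1)
  rw [vsum, cyc_incidence hn, finsum_mem_pair hne]
  rw [show s(v - 1, v) = s(v - 1, v - 1 + 1) from by rw [sub_add_cancel]]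
  rw [cycF_edge hn, cycF_edge hn, add_comm]

/-- For `1 ≤ i ≤ n`, the value of `cycLabZ` at the cast of `i`. -/
lemma cycLabZ_cast (hn : 3 ≤ n) {i : ℕ} (h1 : 1 ≤ i) (h2 : i ≤ n) :
    cycLabZ n ((i : ZMod n)) = cycLab n i := by
  haveI : NeZero n := ⟨by omega⟩
  rw [cycLabZ, ZMod.val_natCast]
  rcases eq_or_lt_of_le h2 with rfl | hlt
  · simp
  · rw [Nat.mod_eq_of_lt hlt]
    rw [if_neg (by omega)]

lemma cycLab_inj (hn : 3 ≤ n) {i j : ℕ} (hi1 : 1 ≤ i) (hi2 : i ≤ n) (hj1 : 1 ≤ j) (hj2 : j ≤ n)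
    (h : cycLab n i = cycLab n j) : i = j := by
  unfold cycLab at h
  split_ifs at h <;> omega

lemma cycLabZ_inj (hn : 3 ≤ n) : Function.Injective (cycLabZ n) := by
  haveI : NeZero n := ⟨by omega⟩
  intro a b h
  unfold cycLabZ at h
  have ha : a.val < n := ZMod.val_lt a
  have hb : b.val < n := ZMod.val_lt b
  have key : (if a.val = 0 then n else a.val) = (if b.val = 0 then n else b.val) := by
    apply cycLab_inj hn _ _ _ _ h <;> split_ifs <;> omega
  have : a.val = b.val := by
    split_ifs at key <;> omega
  exact ZMod.val_injective n this

lemma cycLab_mem (hn : 3 ≤ n) {i : ℕ} (h1 : 1 ≤ i) (h2 : i ≤ n) :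
    1 ≤ cycLab n i ∧ cycLab n i ≤ n := by
  unfold cycLab; split_ifs <;> omega

end Lemmas

open LocalAntimagic in
/-- For `n ≥ 3` the cycle `C_n = x₁x₂⋯x_nx₁` (here `x_i = (i : ZMod n)`) has a
local antimagic labeling `f` with `f⁺(x₁) = 2n - ⌊n/2⌋`, `f⁺(x_i) = n` for odd `i ≠ 1`,
`f⁺(x_i) = n + 1` for even `i`, and `f(x₁x₂) = n`. -/
theorem stmt5 (n : ℕ) (hn : 3 ≤ n) :
    ∃ f : Sym2 (ZMod n) → ℕ, IsLocalAntimagic (cycleGraph n) f ∧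
      vsum (cycleGraph n) f (1 : ZMod n) = 2 * n - n / 2 ∧
      (∀ i : ℕ, 1 ≤ i → i ≤ n → Odd i → i ≠ 1 →
        vsum (cycleGraph n) f ((i : ZMod n)) = n) ∧
      (∀ i : ℕ, 1 ≤ i → i ≤ n → Even i →
        vsum (cycleGraph n) f ((i : ZMod n)) = n + 1) ∧
      f s((1 : ZMod n), (2 : ZMod n)) = n := by
  haveI : NeZero n := ⟨by omega⟩
  refine ⟨cycF n, ⟨?_, ?_⟩, ?_, ?_, ?_, ?_⟩
  · -- BijOn
    have hsize : esize (cycleGraph n) = n := by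
      rw [esize, cyc_edgeSet hn, ← Set.image_univ,
        Set.ncard_image_of_injective _ ?_, Set.ncard_univ, Nat.card_zmod]
      intro a b hab
      simp only [Sym2.eq_iff] at hab
      rcases hab with ⟨h, _⟩ | ⟨h1, h2⟩
      · exact h
      · exfalso; exact cyc_two_ne_zero hn (by linear_combination h2 - h1)
    rw [hsize]
    refine ⟨?_, ?_, ?_⟩
    · -- MapsTo
      intro e he
      rw [cyc_edgeSet hn] at he
      obtain ⟨a, rfl⟩ := he
      simp only
      rw [cycF_edge hn]
      have ha : a.val < n := ZMod.val_lt a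
      have := cycLab_mem hn (i := if a.val = 0 then n else a.val)
        (by split_ifs <;> omega) (by split_ifs <;> omega)
      exact Set.mem_Icc.mpr ⟨this.1, this.2⟩
    · -- InjOn
      intro e1 h1 e2 h2 hf
      rw [cyc_edgeSet hn] at h1 h2
      obtain ⟨a, rfl⟩ := h1
      obtain ⟨b, rfl⟩ := h2
      simp only at hf ⊢
      rw [cycF_edge hn, cycF_edge hn] at hf
      rw [cycLabZ_inj hn hf]
    · -- SurjOn
      intro m hm
      rw [Set.mem_Icc] at hm
      obtain ⟨hm1, hm2⟩ := hm
      by_cases hc : m ≤ n / 2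
      · refine ⟨s(((2 * m : ℕ) : ZMod n), ((2 * m : ℕ) : ZMod n) + 1), ?_, ?_⟩
        · rw [cyc_edgeSet hn]; exact ⟨_, rfl⟩
        · rw [cycF_edge hn, cycLabZ_cast hn (by omega) (by omega)]
          unfold cycLab
          rw [if_neg (by omega)]
          omega
      · refine ⟨s(((2 * (n - m) + 1 : ℕ) : ZMod n), ((2 * (n - m) + 1 : ℕ) : ZMod n) + 1), ?_, ?_⟩
        · rw [cyc_edgeSet hn]; exact ⟨_, rfl⟩
        · rw [cycF_edge hn, cycLabZ_cast hn (by omega) (by omega)]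
          unfold cycLab
          rw [if_pos (by omega)]
          omega
  · -- distinct sums on adjacent vertices
    intro u v huv
    rw [cyc_adj] at huv
    obtain ⟨hne, h | h⟩ := huv
    · subst h
      rw [cyc_vsum hn, cyc_vsum hn, add_sub_cancel_right]
      intro heq
      have h2 : cycLabZ n (v + 1) = cycLabZ n (v - 1) := by omega
      have h3 := cycLabZ_inj hn h2
      exact cyc_two_ne_zero hn (by linear_combination h3)
    · subst h
      rw [cyc_vsum hn, cyc_vsum hn, add_sub_cancel_right]
      intro heq
      have h2 : cycLabZ n (u + 1) = cycLabZ n (u - 1) := by omega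
      have h3 := cycLabZ_inj hn h2
      exact cyc_two_ne_zero hn (by linear_combination h3)
  · -- vsum at x₁
    rw [cyc_vsum hn]
    have h1 : ((1 : ZMod n) - 1) = ((0 : ZMod n)) := by ring
    rw [h1]
    have h0 : cycLabZ n (0 : ZMod n) = cycLab n n := by
      rw [cycLabZ]
      simp [ZMod.val_zero]
    have h1' : cycLabZ n (1 : ZMod n) = cycLab n 1 := by
      have := cycLabZ_cast hn (n := n) (i := 1) le_rfl (by omega)
      simpa using this
    rw [h0, h1']
    unfold cycLab
    split_ifs <;> omega
  · -- odd i ≠ 1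
    intro i hi1 hi2 hodd hne
    rw [cyc_vsum hn]
    have hsub : ((i : ZMod n) - 1) = ((i - 1 : ℕ) : ZMod n) := by
      have : ((i - 1 : ℕ) : ZMod n) = (i : ZMod n) - ((1 : ℕ) : ZMod n) := by
        rw [Nat.cast_sub hi1]
      rw [this]; norm_num
    rw [hsub, cycLabZ_cast hn (by omega) (by omega),
      cycLabZ_cast hn (by omega) (by omega)]
    obtain ⟨k, hk⟩ := hodd
    unfold cycLab
    split_ifs <;> omega
  · -- even i
    intro i hi1 hi2 heven
    obtain ⟨k, hk⟩ := heven
    rw [cyc_vsum hn]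
    have hsub : ((i : ZMod n) - 1) = ((i - 1 : ℕ) : ZMod n) := by
      have : ((i - 1 : ℕ) : ZMod n) = (i : ZMod n) - ((1 : ℕ) : ZMod n) := by
        rw [Nat.cast_sub hi1]
      rw [this]; norm_num
    rw [hsub, cycLabZ_cast hn (by omega) (by omega),
      cycLabZ_cast hn (by omega) (by omega)]
    unfold cycLab
    split_ifs <;> omega
  · -- f(x₁x₂) = n
    have h2 : (2 : ZMod n) = (1 : ZMod n) + 1 := by norm_num
    rw [h2, cycF_edge hn]
    have h1' : cycLabZ n (1 : ZMod n) = cycLab n 1 := by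
      have := cycLabZ_cast hn (n := n) (i := 1) le_rfl (by omega)
      simpa using this
    rw [h1']
    unfold cycLab
    norm_num
end

section
/- If G is a connected bipartite graph whose two partite sets have equal size, then χ_la(G) ≥ 3 (whenever G admits a local antimagic labeling). -/
open scoped BigOperators

open LocalAntimagic in
/-- A connected bipartite graph whose partite sets have equal size has
`χ_la(G) ≥ 3`, whenever it admits a local antimagic labeling. -/
theorem stmt7 {V : Type*} [Fintype V] (G : SimpleGraph V) (hconn : G.Connected)
    (V1 V2 : Set V) (hU : V1 ∪ V2 = Set.univ) (hdisj : Disjoint V1 V2)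
    (hbip : ∀ u v : V, G.Adj u v → (u ∈ V1 ↔ v ∈ V2))
    (hcard : V1.ncard = V2.ncard)
    (f : Sym2 V → ℕ) (hf : IsLocalAntimagic G f) :
    3 ≤ chiLA G := by
  classical
  -- every local antimagic labeling has at least 3 colors
  have key : ∀ g : Sym2 V → ℕ, IsLocalAntimagic G g → 3 ≤ colors G g := by
    intro g hg
    set c : V → ℕ := vsum G g with hc
    -- V1 and V2 are nonempty
    have hVne : Nonempty V := hconn.nonempty
    have hV1ne : V1.Nonempty := by
      rcases V1.eq_empty_or_nonempty with h | h
      · exfalso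
        have h2 : V2 = Set.univ := by
          rw [← hU, h, Set.empty_union]
        have h3 : Nat.card V = 0 := by
          rw [← Set.ncard_univ, ← h2, ← hcard, h, Set.ncard_empty]
        rw [Nat.card_eq_fintype_card] at h3
        exact Fintype.card_ne_zero h3
      · exact h
    have hV2ne : V2.Nonempty := by
      obtain ⟨x, hx⟩ := hV1ne
      have : V2.ncard ≠ 0 := by
        rw [← hcard]
        exact (Set.ncard_pos (Set.toFinite _)).mpr ⟨x, hx⟩ |>.ne'
      rcases V2.eq_empty_or_nonempty with h | h
      · simp [h] at this
      · exact h
    -- there is an edge with left endpoint in V1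
    obtain ⟨x, hx1⟩ := hV1ne
    obtain ⟨y, hy2⟩ := hV2ne
    have hxy : x ≠ y := fun h => Set.disjoint_left.mp hdisj hx1 (h ▸ hy2)
    have hedge : ∃ u v, G.Adj u v ∧ u ∈ V1 ∧ v ∈ V2 := by
      obtain ⟨w⟩ := hconn.preconnected x y
      cases w with
      | nil => exact absurd rfl hxy
      | cons h p =>
        exact ⟨x, _, h, hx1, (hbip _ _ h).mp hx1⟩
    obtain ⟨u0, v0, hadj, hu01, hv02⟩ := hedge
    set a : ℕ := c u0 with ha
    set b : ℕ := c v0 with hb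
    have hab : a ≠ b := hg.2 hadj
    -- suppose for contradiction at most 2 colors
    by_contra hcol
    push_neg at hcol
    have hfin : (Set.range c).Finite := Set.finite_range c
    have hsub : ({a, b} : Set ℕ) ⊆ Set.range c := by
      rintro z (rfl | rfl)
      exacts [⟨u0, rfl⟩, ⟨v0, rfl⟩]
    have hle : (Set.range c).ncard ≤ ({a, b} : Set ℕ).ncard := by
      rw [Set.ncard_pair hab]
      have : colors G g ≤ 2 := Nat.lt_succ_iff.mp hcol
      exact this
    have hreq : ({a, b} : Set ℕ) = Set.range c :=
      Set.eq_of_subset_of_ncard_le hsub hle hfin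
    have hmem : ∀ w : V, c w = a ∨ c w = b := by
      intro w
      have : c w ∈ ({a, b} : Set ℕ) := hreq ▸ ⟨w, rfl⟩
      simpa using this
    -- propagate colors along walks
    have step : ∀ u x : V, G.Adj u x →
        ((u ∈ V1 → c u = a) ∧ (u ∈ V2 → c u = b)) →
        ((x ∈ V1 → c x = a) ∧ (x ∈ V2 → c x = b)) := by
      intro u x hux hu
      have hne : c u ≠ c x := hg.2 hux
      rcases (Set.mem_union u V1 V2).mp (hU ▸ Set.mem_univ u) with h1 | h2
      · have hcu : c u = a := hu.1 h1
        have hx2 : x ∈ V2 := (hbip _ _ hux).mp h1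
        have hxnot1 : x ∉ V1 := fun hx1 => Set.disjoint_left.mp hdisj hx1 hx2
        have hcx : c x = b := by
          rcases hmem x with h | h
          · exact absurd (hcu.trans h.symm) hne
          · exact h
        exact ⟨fun h => absurd h hxnot1, fun _ => hcx⟩
      · have hcu : c u = b := hu.2 h2
        have hx1 : x ∈ V1 := (hbip _ _ hux.symm).mpr h2
        have hxnot2 : x ∉ V2 := fun hx2 => Set.disjoint_left.mp hdisj hx1 hx2
        have hcx : c x = a := by
          rcases hmem x with h | h
          · exact h
          · exact absurd (hcu.trans h.symm) hne
        exact ⟨fun _ => hcx, fun h => absurd h hxnot2⟩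
    have prop : ∀ (u w : V) (_ : G.Walk u w),
        ((u ∈ V1 → c u = a) ∧ (u ∈ V2 → c u = b)) →
        ((w ∈ V1 → c w = a) ∧ (w ∈ V2 → c w = b)) := by
      intro u w p
      induction p with
      | nil => exact id
      | cons h p ih => exact fun hu => ih (step _ _ h hu)
    have mono : ∀ w : V, (w ∈ V1 → c w = a) ∧ (w ∈ V2 → c w = b) := by
      intro w
      obtain ⟨p⟩ := hconn.preconnected u0 w
      exact prop u0 w p ⟨fun _ => rfl, fun h2 => absurd h2
        (fun h2 => Set.disjoint_left.mp hdisj hu01 h2)⟩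
    -- incidence sets of one side partition the edge set
    have hpart : ∀ (W : Set V) (hW : ∀ u v : V, G.Adj u v → (u ∈ W ∨ v ∈ W))
        (hW2 : ∀ u v : V, u ∈ W → v ∈ W → ¬ G.Adj u v),
        ∑ᶠ v ∈ W, c v = ∑ᶠ e ∈ G.edgeSet, g e := by
      intro W hW hW2
      have hpd : W.PairwiseDisjoint G.incidenceSet := by
        intro u hu v hv huv
        have : G.incidenceSet u ∩ G.incidenceSet v = ∅ :=
          G.incidenceSet_inter_incidenceSet_of_not_adj (hW2 u v hu hv) huv
        exact Set.disjoint_iff_inter_eq_empty.mpr this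
      have hcover : (⋃ x ∈ W, G.incidenceSet x) = G.edgeSet := by
        apply Set.Subset.antisymm
        · exact Set.iUnion₂_subset fun x _ => G.incidenceSet_subset x
        · intro e he
          induction e with
          | h u v =>
            have hadj' : G.Adj u v := he
            rcases hW u v hadj' with h | h
            · exact Set.mem_biUnion h (G.mk'_mem_incidenceSet_left_iff.mpr hadj')
            · exact Set.mem_biUnion h (G.mk'_mem_incidenceSet_right_iff.mpr hadj')
      calc ∑ᶠ v ∈ W, c v = ∑ᶠ e ∈ ⋃ x ∈ W, G.incidenceSet x, g e :=
            (finsum_mem_biUnion hpd (Set.toFinite _) fun i _ => Set.toFinite _).symm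
        _ = ∑ᶠ e ∈ G.edgeSet, g e := by rw [hcover]
    have hsum1 : ∑ᶠ v ∈ V1, c v = ∑ᶠ e ∈ G.edgeSet, g e := by
      apply hpart
      · intro u v h
        rcases (Set.mem_union u V1 V2).mp (hU ▸ Set.mem_univ u) with h1 | h2
        · exact Or.inl h1
        · exact Or.inr ((hbip _ _ h.symm).mpr h2)
      · intro u v hu hv hadj'
        exact Set.disjoint_left.mp hdisj hv ((hbip _ _ hadj').mp hu)
    have hsum2 : ∑ᶠ v ∈ V2, c v = ∑ᶠ e ∈ G.edgeSet, g e := by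
      apply hpart
      · intro u v h
        rcases (Set.mem_union u V1 V2).mp (hU ▸ Set.mem_univ u) with h1 | h2
        · exact Or.inr ((hbip _ _ h).mp h1)
        · exact Or.inl h2
      · intro u v hu hv hadj'
        exact Set.disjoint_left.mp hdisj ((hbip u v hadj').mpr hv) hu
    have hconst : ∀ (W : Set V) (z : ℕ), (∀ w ∈ W, c w = z) →
        ∑ᶠ v ∈ W, c v = W.ncard * z := by
      intro W z hz
      rw [finsum_mem_eq_finite_toFinset_sum _ (Set.toFinite W)]
      rw [Finset.sum_congr rfl (fun x hx => hz x ((Set.toFinite W).mem_toFinset.mp hx))]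
      rw [Finset.sum_const, Set.ncard_eq_toFinset_card _ (Set.toFinite W), smul_eq_mul]
    have h1 : V1.ncard * a = V2.ncard * b := by
      rw [← hconst V1 a (fun w hw => (mono w).1 hw), ← hconst V2 b (fun w hw => (mono w).2 hw),
        hsum1, hsum2]
    rw [← hcard] at h1
    have hn : 0 < V1.ncard := (Set.ncard_pos (Set.toFinite _)).mpr ⟨u0, hu01⟩
    exact hab (Nat.eq_of_mul_eq_mul_left hn h1)
  refine le_csInf ⟨colors G f, f, hf, rfl⟩ ?_
  rintro b ⟨g, hg, rfl⟩
  exact key g hg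
end

section
/- Let q, m, n, a, b, x, y, t be positive integers with t ≥ 3, q = 2mx + 2b = 2ny + 2a, x, y ≥ 2, a, b ≥ 1. Then the three quantities A = [(a+b)(q+1)+ny]t² − (t²−1)(a+b), B = m(q+1)t² − (t²−1)m, C = nqt² − (t²−1)n are pairwise distinct. -/
open scoped BigOperators

private lemma stmt14_helper (d s q t : ℤ) (hs : 1 ≤ s) (hq : s < q) (ht : 3 ≤ t)
    (h : d * (q * t ^ 2 + 1) = -(s * t ^ 2)) : False := by
  have ht2 : (9 : ℤ) ≤ t ^ 2 := by nlinarith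
  have hqt : (0 : ℤ) < q * t ^ 2 + 1 := by nlinarith
  have hst : s * t ^ 2 < q * t ^ 2 := by
    have := mul_lt_mul_of_pos_right hq (show (0:ℤ) < t ^ 2 by linarith)
    linarith
  rcases le_or_gt 0 d with h0 | h0
  · nlinarith [mul_nonneg h0 hqt.le]
  · have hd : d ≤ -1 := by omega
    have := mul_le_mul_of_nonneg_right hd hqt.le
    nlinarith

set_option maxHeartbeats 1600000 in
/-- With `q = 2mx + 2b = 2ny + 2a`, `x, y ≥ 2`, `a, b ≥ 1`, `t ≥ 3`, the three
quantities `A = [(a+b)(q+1)+ny]t² − (t²−1)(a+b)`, `B = m(q+1)t² − (t²−1)m` and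
`C = nqt² − (t²−1)n` are pairwise distinct. -/
theorem stmt14 (q m n x y a b t : ℕ) (hm : 0 < m) (hn : 0 < n)
    (hx : 2 ≤ x) (hy : 2 ≤ y) (ha : 1 ≤ a) (hb : 1 ≤ b) (ht : 3 ≤ t)
    (h1 : q = 2 * m * x + 2 * b) (h2 : q = 2 * n * y + 2 * a) :
    (((a + b) * (q + 1) + n * y) * t ^ 2 - (t ^ 2 - 1) * (a + b) ≠
        m * (q + 1) * t ^ 2 - (t ^ 2 - 1) * m) ∧
    (((a + b) * (q + 1) + n * y) * t ^ 2 - (t ^ 2 - 1) * (a + b) ≠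
        n * q * t ^ 2 - (t ^ 2 - 1) * n) ∧
    (m * (q + 1) * t ^ 2 - (t ^ 2 - 1) * m ≠ n * q * t ^ 2 - (t ^ 2 - 1) * n) := by
  have ht2 : 1 ≤ t ^ 2 := by nlinarith
  have castsub : ∀ c k : ℕ, k ≤ c →
      ((c * t ^ 2 - (t ^ 2 - 1) * k : ℕ) : ℤ) = (c : ℤ) * t ^ 2 - (t ^ 2 - 1) * k := by
    intro c k hkc
    have hle : (t ^ 2 - 1) * k ≤ c * t ^ 2 := by
      calc (t ^ 2 - 1) * k ≤ t ^ 2 * k := Nat.mul_le_mul_right _ (Nat.sub_le _ _)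
        _ = k * t ^ 2 := Nat.mul_comm _ _
        _ ≤ c * t ^ 2 := Nat.mul_le_mul_right _ hkc
    push_cast [Nat.cast_sub hle, Nat.cast_sub ht2]
    ring
  have cA := castsub ((a + b) * (q + 1) + n * y) (a + b) (by nlinarith)
  have cB := castsub (m * (q + 1)) m (by nlinarith)
  have cC := castsub (n * q) n (by nlinarith)
  have hq2 : (q : ℤ) = 2 * n * y + 2 * a := by exact_mod_cast h2
  have hny : (1 : ℤ) ≤ n * y := by
    have : 1 ≤ n * y := Nat.one_le_iff_ne_zero.mpr (by positivity)
    exact_mod_cast this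
  have ha' : (1 : ℤ) ≤ a := by exact_mod_cast ha
  have hy' : (2 : ℤ) ≤ y := by exact_mod_cast hy
  have hn0 : (0 : ℤ) ≤ n := by positivity
  have hny2 : 2 * (n : ℤ) ≤ n * y := by nlinarith
  have hn' : (1 : ℤ) ≤ n := by exact_mod_cast hn
  have ht' : (3 : ℤ) ≤ t := by exact_mod_cast ht
  refine ⟨?_, ?_, ?_⟩
  · intro h
    have hZ : ((a : ℤ) + b) * (q + 1) * t ^ 2 + n * y * t ^ 2 - (t ^ 2 - 1) * (a + b) =
        m * (q + 1) * t ^ 2 - (t ^ 2 - 1) * m := by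
      have := congrArg (Nat.cast : ℕ → ℤ) h
      rw [cA, cB] at this; push_cast at this ⊢; linarith
    refine stmt14_helper ((a : ℤ) + b - m) (n * y) q t hny (by linarith) ht' ?_
    linear_combination hZ
  · intro h
    have hZ : ((a : ℤ) + b) * (q + 1) * t ^ 2 + n * y * t ^ 2 - (t ^ 2 - 1) * (a + b) =
        n * q * t ^ 2 - (t ^ 2 - 1) * n := by
      have := congrArg (Nat.cast : ℕ → ℤ) h
      rw [cA, cC] at this; push_cast at this ⊢; linarith
    refine stmt14_helper ((a : ℤ) + b - n) (n * y + n) q t (by linarith) (by linarith) ht' ?_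
    linear_combination hZ
  · intro h
    have hZ : (m : ℤ) * (q + 1) * t ^ 2 - (t ^ 2 - 1) * m =
        n * q * t ^ 2 - (t ^ 2 - 1) * n := by
      have := congrArg (Nat.cast : ℕ → ℤ) h
      rw [cB, cC] at this; exact this
    refine stmt14_helper ((m : ℤ) - n) n q t hn' (by linarith) ht' ?_
    linear_combination hZ
end

section
/- Let G be a graph, f a local antimagic labeling of G, n ≥ 3, and construct the edge labeling g of G[O_n] by replacing the edge labeled i (a K_{n,n} in G[O_n]) with a magic square Ω + (i−1)n²J of order n. Then for every vertex (u, x) of G[O_n], g⁺((u,x)) = f⁺(u)·n³ − (n³−n)·deg_G(u)/2. -/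
open scoped BigOperators

/-- The lexicographic product `G[O_n]` of `G` with the null graph of order `n`:
vertex set `V × Fin n`, with `(u, i)` adjacent to `(v, j)` iff `u` is adjacent to `v`. -/
def lexO {V : Type*} (G : SimpleGraph V) (n : ℕ) : SimpleGraph (V × Fin n) where
  Adj p q := G.Adj p.1 q.1
  symm := ⟨by intro a b h; exact G.adj_symm h⟩
  loopless := ⟨by intro p h; exact G.irrefl h⟩


open LocalAntimagic in
lemma vsum_eq_sum' {V : Type*} [Fintype V] (G : SimpleGraph V) [DecidableRel G.Adj]
    (h : Sym2 V → ℕ) (u : V) :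
    vsum G h u = ∑ v ∈ G.neighborFinset u, h s(u, v) := by
  have himg : G.incidenceSet u = (fun v => s(u, v)) '' (G.neighborSet u) := by
    ext e
    induction e using Sym2.inductionOn with
    | hf a b =>
      constructor
      · rintro he
        obtain ⟨hab, hu | hu⟩ := G.mk'_mem_incidenceSet_iff.mp he
        · exact ⟨b, hu ▸ hab, by rw [hu]⟩
        · exact ⟨a, hu ▸ hab.symm, by rw [hu, Sym2.eq_swap]⟩
      · rintro ⟨v, hv, hveq⟩
        rw [← hveq]
        exact G.mk'_mem_incidenceSet_iff.mpr ⟨hv, Or.inl rfl⟩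
  have hinj : Set.InjOn (fun v => s(u, v)) (G.neighborSet u) := by
    intro a _ b _ hab
    exact Sym2.congr_right.mp hab
  rw [vsum, himg, finsum_mem_image hinj, ← finsum_mem_coe_finset]
  congr 1
  rw [SimpleGraph.neighborFinset_def, Set.coe_toFinset]

open LocalAntimagic in
/-- If `f` is a local antimagic labeling of `G`, `n ≥ 3`, `Ω` a magic square of
order `n`, and `g` labels the copy of `K_{n,n}` of `G[O_n]` over an edge `uv` (with `u < v`)
labeled `i = f(uv)` by the entries of `Ω + (i−1)n²J`, then for every vertex `(u, x)` of
`G[O_n]` we have `g⁺((u,x)) = f⁺(u)·n³ − (n³−n)·deg_G(u)/2`. -/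
theorem stmt16 {V : Type*} [Fintype V] [LinearOrder V] (G : SimpleGraph V)
    (n : ℕ) (hn : 3 ≤ n) (f : Sym2 V → ℕ) (hf : IsLocalAntimagic G f)
    (Ω : Matrix (Fin n) (Fin n) ℕ)
    (hperm : ∀ k : ℕ, k ∈ Finset.Icc 1 (n ^ 2) ↔ ∃! p : Fin n × Fin n, Ω p.1 p.2 = k)
    (hrow : ∀ r : Fin n, ∑ c, Ω r c = (n ^ 3 + n) / 2)
    (hcol : ∀ c : Fin n, ∑ r, Ω r c = (n ^ 3 + n) / 2)
    (g : Sym2 (V × Fin n) → ℕ)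
    (hg : ∀ u v : V, G.Adj u v → u < v → ∀ i j : Fin n,
      g s((u, i), (v, j)) = Ω i j + (f s(u, v) - 1) * n ^ 2) :
    ∀ (u : V) (x : Fin n),
      vsum (lexO G n) g (u, x) =
        vsum G f u * n ^ 3 - (n ^ 3 - n) * (G.neighborSet u).ncard / 2 := by
  classical
  intro u x
  set q := esize G
  have hm2 : (n ^ 3 + n) / 2 * 2 = n ^ 3 + n := by
    apply Nat.div_mul_cancel
    rcases Nat.even_or_odd n with he | ho
    · have h3 : Even (n ^ 3) := by
        have := he.mul_right (n ^ 2)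
        rwa [show n * n ^ 2 = n ^ 3 by ring] at this
      exact (h3.add he).two_dvd
    · exact ((ho.pow.add_odd ho)).two_dvd
  set m := (n ^ 3 + n) / 2 with hm
  -- rewrite both vsums as finset sums over neighbors
  rw [vsum_eq_sum' (lexO G n) g (u, x), vsum_eq_sum' G f u]
  -- the neighbor finset of (u,x) in lexO is a product
  have hnbr : (lexO G n).neighborFinset (u, x) = (G.neighborFinset u) ×ˢ Finset.univ := by
    ext ⟨v, j⟩
    simp only [SimpleGraph.mem_neighborFinset, Finset.mem_product, Finset.mem_univ, and_true]
    exact Iff.rfl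
  rw [hnbr, Finset.sum_product]
  -- inner sum over the copies
  have hinner : ∀ v ∈ G.neighborFinset u,
      (∑ j : Fin n, g s((u, x), (v, j))) = m + (f s(u, v) - 1) * n ^ 3 := by
    intro v hv
    rw [SimpleGraph.mem_neighborFinset] at hv
    rcases lt_trichotomy u v with hlt | heq | hlt
    · have : ∀ j : Fin n, g s((u, x), (v, j)) = Ω x j + (f s(u, v) - 1) * n ^ 2 :=
        fun j => hg u v hv hlt x j
      simp only [this, Finset.sum_add_distrib, hrow x, Finset.sum_const, Finset.card_univ,
        Fintype.card_fin, smul_eq_mul]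
      ring
    · exact absurd heq (G.ne_of_adj hv)
    · have hswap : (s(u, v) : Sym2 V) = s(v, u) := Sym2.eq_swap
      have : ∀ j : Fin n, g s((u, x), (v, j)) = Ω j x + (f s(u, v) - 1) * n ^ 2 := by
        intro j
        have := hg v u hv.symm hlt j x
        rw [show (s((u, x), (v, j)) : Sym2 (V × Fin n)) = s((v, j), (u, x)) from Sym2.eq_swap,
          this, hswap]
      simp only [this, Finset.sum_add_distrib, hcol x, Finset.sum_const, Finset.card_univ,
        Fintype.card_fin, smul_eq_mul]
      ring
  rw [Finset.sum_congr rfl hinner, Finset.sum_add_distrib, Finset.sum_const, smul_eq_mul,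
    ← Finset.sum_mul]
  -- arithmetic
  have hf1 : ∀ v ∈ G.neighborFinset u, 1 ≤ f s(u, v) := by
    intro v hv
    rw [SimpleGraph.mem_neighborFinset] at hv
    exact (Set.mem_Icc.mp (hf.1.mapsTo hv)).1
  set d := (G.neighborFinset u).card with hd
  have hcard : (G.neighborSet u).ncard = d := by
    rw [hd, SimpleGraph.neighborFinset_def, Set.ncard_eq_toFinset_card']
  rw [hcard]
  have hsum : (∑ v ∈ G.neighborFinset u, f s(u, v)) =
      (∑ v ∈ G.neighborFinset u, (f s(u, v) - 1)) + d := by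
    rw [hd, Finset.card_eq_sum_ones, ← Finset.sum_add_distrib]
    exact Finset.sum_congr rfl fun v hv => (Nat.sub_add_cancel (hf1 v hv)).symm
  rw [hsum]
  have hnn : n ≤ n ^ 3 := Nat.le_self_pow (by norm_num) n
  set T := ∑ v ∈ G.neighborFinset u, (f s(u, v) - 1) with hT
  -- (n^3 - n) is even
  have hk2 : (n ^ 3 - n) / 2 * 2 = n ^ 3 - n := by
    apply Nat.div_mul_cancel
    rcases Nat.even_or_odd n with he | ho
    · have h3 : Even (n ^ 3) := by
        have := he.mul_right (n ^ 2)
        rwa [show n * n ^ 2 = n ^ 3 by ring] at this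
      exact ((Nat.even_sub hnn).mpr (iff_of_true h3 he)).two_dvd
    · exact (Nat.Odd.sub_odd ho.pow ho).two_dvd
  set k := (n ^ 3 - n) / 2 with hk
  have hmk : n ^ 3 = m + k := by omega
  have hdiv : (n ^ 3 - n) * d / 2 = k * d := by
    rw [← hk2, show k * 2 * d = k * d * 2 by ring, Nat.mul_div_cancel _ (by norm_num)]
  rw [hdiv]
  have hfin : (T + d) * n ^ 3 = (d * m + T * n ^ 3) + k * d := by
    rw [hmk]; ring
  rw [hfin]
  omega
end

section
/- For all integers m ≥ 2 and n ≥ 2, χ_la(m · C_{2n}) = 3, where m · C_{2n} denotes the disjoint union of m copies of the cycle C_{2n}. -/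
open scoped BigOperators

/-- The disjoint union `m · C_n` of `m` copies of the cycle on `ZMod n`. -/
def mCycles (m n : ℕ) : SimpleGraph (Fin m × ZMod n) :=
  SimpleGraph.fromRel (fun p q => p.1 = q.1 ∧ p.2 = q.2 + 1)

namespace Stmt19

/-- small positive naturals are nonzero in `ZMod N` -/
lemma cast_ne_zero {N c : ℕ} (hc : 0 < c) (hcN : c < N) : (c : ZMod N) ≠ 0 := by
  intro h
  haveI : NeZero N := ⟨by omega⟩
  rw [ZMod.natCast_eq_zero_iff] at h
  exact absurd (Nat.le_of_dvd hc h) (by omega)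

lemma add_one_ne {N : ℕ} (hN : 2 ≤ N) (k : ZMod N) : k + 1 ≠ k := by
  intro h
  have h1 : ((1 : ℕ) : ZMod N) = 0 := by
    have := congrArg (fun x => x - k) h
    simpa using this
  exact cast_ne_zero (by omega) (by omega) h1

lemma add_two_ne {N : ℕ} (hN : 3 ≤ N) (k : ZMod N) : k + 2 ≠ k := by
  intro h
  have h1 : ((2 : ℕ) : ZMod N) = 0 := by
    have := congrArg (fun x => x - k) h
    push_cast
    simpa using this
  exact cast_ne_zero (by omega) (by omega) h1

lemma sub_one_ne {N : ℕ} (hN : 2 ≤ N) (k : ZMod N) : k - 1 ≠ k := by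
  intro h
  have := congrArg (fun x => x + 1) h
  simp only [sub_add_cancel] at this
  exact add_one_ne hN k this.symm

variable {m N : ℕ}

/-- the canonical edge at a vertex -/
def E (p : Fin m × ZMod N) : Sym2 (Fin m × ZMod N) := s(p, (p.1, p.2 + 1))

lemma E_inj (hN : 3 ≤ N) : Function.Injective (E (m := m) (N := N)) := by
  intro p q h
  rw [E, E, Sym2.eq_iff] at h
  rcases h with ⟨h1, _⟩ | ⟨h1, h2⟩
  · exact h1
  · exfalso
    have e1 : p.2 = q.2 + 1 := congrArg Prod.snd h1
    have e2 : q.2 = p.2 + 1 := (congrArg Prod.snd h2).symm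
    rw [e2] at e1
    exact add_two_ne hN p.2 (by rw [show p.2 + 2 = p.2 + 1 + 1 from by ring, ← e1])

lemma adj_iff (u v : Fin m × ZMod N) :
    (mCycles m N).Adj u v ↔ u ≠ v ∧ ((u.1 = v.1 ∧ u.2 = v.2 + 1) ∨ (v.1 = u.1 ∧ v.2 = u.2 + 1)) :=
  SimpleGraph.fromRel_adj _ u v

lemma E_mem_edgeSet (hN : 2 ≤ N) (p : Fin m × ZMod N) : E p ∈ (mCycles m N).edgeSet := by
  rw [E, SimpleGraph.mem_edgeSet, adj_iff]
  refine ⟨?_, Or.inr ⟨rfl, rfl⟩⟩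
  intro h
  have := congrArg Prod.snd h
  exact add_one_ne hN p.2 this.symm

lemma edgeSet_eq (hN : 2 ≤ N) : (mCycles m N).edgeSet = Set.range (E (m := m) (N := N)) := by
  ext e
  constructor
  · intro he
    induction e using Sym2.ind with
    | _ u v =>
      rw [SimpleGraph.mem_edgeSet, adj_iff] at he
      rcases he with ⟨hne, ⟨h1, h2⟩ | ⟨h1, h2⟩⟩
      · refine ⟨v, ?_⟩
        rw [E, show ((v.1, v.2 + 1) : Fin m × ZMod N) = u from Prod.ext h1.symm h2.symm,
          Sym2.eq_swap]
      · refine ⟨u, ?_⟩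
        rw [E, show ((u.1, u.2 + 1) : Fin m × ZMod N) = v from Prod.ext h1.symm h2.symm]
  · rintro ⟨p, rfl⟩
    exact E_mem_edgeSet hN p

lemma incidenceSet_eq (hN : 3 ≤ N) (p : Fin m × ZMod N) :
    (mCycles m N).incidenceSet p = {E (p.1, p.2 - 1), E p} := by
  ext e
  constructor
  · rintro ⟨he, hp⟩
    rw [edgeSet_eq (by omega)] at he
    obtain ⟨q, rfl⟩ := he
    rw [E, Sym2.mem_iff] at hp
    simp only [Set.mem_insert_iff, Set.mem_singleton_iff]
    rcases hp with hp | hp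
    · right; rw [hp]
    · left
      have h1 : q.1 = p.1 := by rw [hp]
      have h2 : q.2 = p.2 - 1 := by
        have hq : p.2 = q.2 + 1 := by rw [hp]
        rw [hq]; ring
      congr 1
      exact Prod.ext h1 h2
  · intro he
    simp only [Set.mem_insert_iff, Set.mem_singleton_iff] at he
    rcases he with he | he
    · subst he
      refine ⟨E_mem_edgeSet (by omega) _, ?_⟩
      rw [E, Sym2.mem_iff]
      right
      exact Prod.ext rfl (by simp [sub_add_cancel])
    · subst he
      exact ⟨E_mem_edgeSet (by omega) p, Sym2.mem_mk_left _ _⟩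

lemma vsum_eq (hN : 3 ≤ N) (f : Sym2 (Fin m × ZMod N) → ℕ) (p : Fin m × ZMod N) :
    LocalAntimagic.vsum (mCycles m N) f p = f (E (p.1, p.2 - 1)) + f (E p) := by
  rw [LocalAntimagic.vsum, incidenceSet_eq hN]
  refine finsum_mem_pair ?_
  intro h
  have := E_inj hN h
  have h2 : p.2 - 1 = p.2 := congrArg Prod.snd this
  exact sub_one_ne (by omega) p.2 h2

lemma card_prod [NeZero N] : Fintype.card (Fin m × ZMod N) = m * N := by
  simp [ZMod.card]

lemma esize_eq (hN : 3 ≤ N) [NeZero N] : LocalAntimagic.esize (mCycles m N) = m * N := by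
  rw [LocalAntimagic.esize, edgeSet_eq (by omega), ← Set.image_univ,
    Set.ncard_image_of_injective _ (E_inj hN), Set.ncard_univ, Nat.card_eq_fintype_card,
    card_prod]

/-! ### The labeling -/

/-- arithmetic form of edge labels: `q = m*n`, `a = j*n`, `t` = position of edge. -/
def H (q a t : ℕ) : ℕ := if t % 2 = 0 then a + t / 2 + 1 else 2 * q + 1 - (a + (t + 1) / 2)

lemma euclid {n j j' a a' : ℕ} (ha : a < n) (ha' : a' < n)
    (h : j * n + a = j' * n + a') : j = j' ∧ a = a' := by
  have key : ∀ x y b b' : ℕ, b < n → b' < n → x < y → x * n + b ≠ y * n + b' := by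
    intro x y b b' hb hb' hxy heq
    have h1 : (x + 1) * n ≤ y * n := Nat.mul_le_mul_right n (by omega)
    have h2 : (x + 1) * n = x * n + n := by ring
    omega
  rcases Nat.lt_trichotomy j j' with hlt | heq | hgt
  · exact absurd h (key _ _ _ _ ha ha' hlt)
  · subst heq; omega
  · exact absurd h.symm (key _ _ _ _ ha' ha hgt)

lemma H_inj {q n j j' t t' : ℕ} (hn : 1 ≤ n) (hj : j * n + n ≤ q) (hj' : j' * n + n ≤ q)
    (ht : t < 2 * n) (ht' : t' < 2 * n) (h : H q (j * n) t = H q (j' * n) t') :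
    j = j' ∧ t = t' := by
  unfold H at h
  split_ifs at h with p1 p2 p2
  · have := euclid (n := n) (show t / 2 < n by omega) (show t' / 2 < n by omega)
      (show j * n + t / 2 = j' * n + t' / 2 by omega)
    omega
  · exfalso; omega
  · exfalso; omega
  · have := euclid (n := n) (show (t + 1) / 2 - 1 < n by omega)
      (show (t' + 1) / 2 - 1 < n by omega)
      (show j * n + ((t + 1) / 2 - 1) = j' * n + ((t' + 1) / 2 - 1) by omega)
    omega

lemma H_bounds {q n a t : ℕ} (hn : 1 ≤ n) (ha : a + n ≤ q) (ht : t < 2 * n) :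
    1 ≤ H q a t ∧ H q a t ≤ 2 * q ∧ (t % 2 = 0 → H q a t ≤ q) ∧
      (t % 2 = 1 → q + 1 ≤ H q a t) := by
  unfold H; split_ifs <;> omega

/-- the label on vertices giving via `E` the edge labels. -/
def lab (n : ℕ) (p : Fin m × ZMod (2 * n)) : ℕ := H (m * n) (p.1.val * n) p.2.val

/-- the labeling function on `Sym2`. -/
noncomputable def F (m n : ℕ) : Sym2 (Fin m × ZMod (2 * n)) → ℕ :=
  Function.extend (E (m := m) (N := 2 * n)) (lab n) 0

lemma F_apply (hn : 2 ≤ n) (p : Fin m × ZMod (2 * n)) : F m n (E p) = lab n p :=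
  (E_inj (by omega)).extend_apply _ _ p

lemma lab_ha (hn : 1 ≤ n) (p : Fin m × ZMod (2 * n)) : p.1.val * n + n ≤ m * n := by
  have h1 : (p.1.val + 1) * n ≤ m * n := Nat.mul_le_mul_right n (by omega)
  have h2 : (p.1.val + 1) * n = p.1.val * n + n := by ring
  omega

lemma val_inj' {N : ℕ} [NeZero N] {a b : ZMod N} (h : a.val = b.val) : a = b := by
  have ha : ((a.val : ℕ) : ZMod N) = a := by rw [ZMod.natCast_val, ZMod.cast_id]
  have hb : ((b.val : ℕ) : ZMod N) = b := by rw [ZMod.natCast_val, ZMod.cast_id]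
  rw [← ha, ← hb, h]

lemma lab_inj (hn : 2 ≤ n) : Function.Injective (lab (m := m) n) := by
  haveI : NeZero (2 * n) := ⟨by omega⟩
  intro p p' h
  have := H_inj (by omega) (lab_ha (by omega) p) (lab_ha (by omega) p')
    (ZMod.val_lt p.2) (ZMod.val_lt p'.2) h
  exact Prod.ext (Fin.ext this.1) (val_inj' this.2)

lemma F_bijOn (hm : 2 ≤ m) (hn : 2 ≤ n) :
    Set.BijOn (F m n) (mCycles m (2 * n)).edgeSet
      (Set.Icc 1 (LocalAntimagic.esize (mCycles m (2 * n)))) := by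
  haveI : NeZero (2 * n) := ⟨by omega⟩
  have hq : LocalAntimagic.esize (mCycles m (2 * n)) = m * (2 * n) := esize_eq (by omega)
  have hql : m * (2 * n) = 2 * (m * n) := by ring
  have hmaps : ∀ p : Fin m × ZMod (2 * n),
      lab n p ∈ Set.Icc 1 (LocalAntimagic.esize (mCycles m (2 * n))) := by
    intro p
    have hb := H_bounds (q := m * n) (n := n) (a := p.1.val * n) (t := p.2.val)
      (by omega) (lab_ha (by omega) p) (ZMod.val_lt p.2)
    rw [hq, Set.mem_Icc]
    unfold lab
    omega
  refine ⟨?_, ?_, ?_⟩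
  · intro x hx
    rw [edgeSet_eq (by omega)] at hx
    obtain ⟨p, rfl⟩ := hx
    rw [F_apply hn]
    exact hmaps p
  · intro x hx y hy hxy
    rw [edgeSet_eq (by omega)] at hx hy
    obtain ⟨p, rfl⟩ := hx
    obtain ⟨p', rfl⟩ := hy
    rw [F_apply hn, F_apply hn] at hxy
    exact congrArg E (lab_inj hn hxy)
  · have himg : F m n '' (mCycles m (2 * n)).edgeSet = Set.range (lab (m := m) n) := by
      have hce : F m n ∘ (E (m := m) (N := 2 * n)) = lab n := funext fun p => F_apply hn p
      rw [edgeSet_eq (by omega), ← Set.range_comp, hce]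
    have hsub : Set.range (lab (m := m) n) ⊆
        Set.Icc 1 (LocalAntimagic.esize (mCycles m (2 * n))) := by
      rintro x ⟨p, rfl⟩
      exact hmaps p
    have hcard1 : (Set.range (lab (m := m) n)).ncard = m * (2 * n) := by
      rw [← Set.image_univ, Set.ncard_image_of_injective _ (lab_inj hn), Set.ncard_univ,
        Nat.card_eq_fintype_card, card_prod]
    have hcard2 : (Set.Icc 1 (LocalAntimagic.esize (mCycles m (2 * n)))).ncard
        = m * (2 * n) := by
      rw [hq, Set.ncard_eq_toFinset_card', Set.toFinset_Icc, Nat.card_Icc]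
      omega
    have : Set.range (lab (m := m) n)
        = Set.Icc 1 (LocalAntimagic.esize (mCycles m (2 * n))) :=
      Set.eq_of_subset_of_ncard_le hsub (by rw [hcard1, hcard2]) (Set.finite_Icc _ _)
    intro x hx
    rw [himg, this]
    exact hx

/-- the vertex sums obtained from the labeling -/
def S (q n t : ℕ) : ℕ := if t = 0 then 2 * q + 2 - n else if t % 2 = 0 then 2 * q + 2 else 2 * q + 1

lemma val_sub_one {N : ℕ} [NeZero N] (hN : 1 ≤ N) (k : ZMod N) :
    (k - 1).val = if k.val = 0 then N - 1 else k.val - 1 := by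
  have hk : ((k.val : ℕ) : ZMod N) = k := by rw [ZMod.natCast_val, ZMod.cast_id]
  have hlt := ZMod.val_lt k
  split_ifs with h
  · have hk0 : k = 0 := by rw [← hk, h, Nat.cast_zero]
    have h1 : ((N - 1 : ℕ) : ZMod N) + 1 = 0 := by
      have : ((N - 1 : ℕ) : ZMod N) + 1 = ((N - 1 + 1 : ℕ) : ZMod N) := by push_cast; ring
      rw [this, Nat.sub_add_cancel hN, ZMod.natCast_self]
    have h2 : k - 1 = ((N - 1 : ℕ) : ZMod N) := by
      rw [hk0, zero_sub]
      exact (eq_neg_of_add_eq_zero_left h1).symm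
    rw [h2, ZMod.val_natCast, Nat.mod_eq_of_lt (by omega)]
  · have h2 : k - 1 = ((k.val - 1 : ℕ) : ZMod N) := by
      rw [sub_eq_iff_eq_add]
      calc k = ((k.val : ℕ) : ZMod N) := hk.symm
        _ = (((k.val - 1) + 1 : ℕ) : ZMod N) := by rw [Nat.sub_add_cancel (by omega)]
        _ = ((k.val - 1 : ℕ) : ZMod N) + 1 := by push_cast; ring
    rw [h2, ZMod.val_natCast, Nat.mod_eq_of_lt (by omega)]

lemma val_add_one {N : ℕ} [NeZero N] (k : ZMod N) :
    (k + 1).val = if k.val = N - 1 then 0 else k.val + 1 := by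
  have hk : ((k.val : ℕ) : ZMod N) = k := by rw [ZMod.natCast_val, ZMod.cast_id]
  have hlt := ZMod.val_lt k
  have hN : 1 ≤ N := Nat.pos_of_ne_zero (NeZero.ne N)
  have h2 : k + 1 = ((k.val + 1 : ℕ) : ZMod N) := by
    calc k + 1 = ((k.val : ℕ) : ZMod N) + 1 := by rw [hk]
      _ = ((k.val + 1 : ℕ) : ZMod N) := by push_cast; ring
  rw [h2, ZMod.val_natCast]
  split_ifs with h
  · rw [h, Nat.sub_add_cancel hN, Nat.mod_self]
  · rw [Nat.mod_eq_of_lt (by omega)]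

lemma vsum_F (hm : 2 ≤ m) (hn : 2 ≤ n) (p : Fin m × ZMod (2 * n)) :
    LocalAntimagic.vsum (mCycles m (2 * n)) (F m n) p = S (m * n) n p.2.val := by
  haveI : NeZero (2 * n) := ⟨by omega⟩
  rw [vsum_eq (by omega), F_apply hn, F_apply hn]
  unfold lab
  have hfst : ((p.1, p.2 - 1) : Fin m × ZMod (2 * n)).1 = p.1 := rfl
  have hsnd : ((p.1, p.2 - 1) : Fin m × ZMod (2 * n)).2 = p.2 - 1 := rfl
  rw [hfst, hsnd, val_sub_one (by omega)]
  have ha := lab_ha (m := m) (by omega : 1 ≤ n) p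
  have ht : p.2.val < 2 * n := ZMod.val_lt p.2
  unfold H S
  split_ifs <;> omega

lemma vsum_F_cast (hm : 2 ≤ m) (hn : 2 ≤ n) (j : Fin m) (t : ℕ) (ht : t < 2 * n) :
    LocalAntimagic.vsum (mCycles m (2 * n)) (F m n) (j, (t : ZMod (2 * n)))
      = S (m * n) n t := by
  haveI : NeZero (2 * n) := ⟨by omega⟩
  rw [vsum_F hm hn]
  congr 1
  exact (ZMod.val_natCast (2 * n) t).trans (Nat.mod_eq_of_lt ht)

lemma range_vsum (hm : 2 ≤ m) (hn : 2 ≤ n) :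
    Set.range (LocalAntimagic.vsum (mCycles m (2 * n)) (F m n))
      = {2 * (m * n) + 2 - n, 2 * (m * n) + 2, 2 * (m * n) + 1} := by
  haveI : NeZero (2 * n) := ⟨by omega⟩
  ext x
  simp only [Set.mem_range, Set.mem_insert_iff, Set.mem_singleton_iff]
  constructor
  · rintro ⟨p, rfl⟩
    rw [vsum_F hm hn]
    unfold S
    split_ifs <;> tauto
  · intro hx
    rcases hx with hx | hx | hx
    · refine ⟨(⟨0, by omega⟩, ((0 : ℕ) : ZMod (2 * n))), ?_⟩
      rw [vsum_F_cast hm hn _ _ (by omega)]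
      simp only [S]
      norm_num
      omega
    · refine ⟨(⟨0, by omega⟩, ((2 : ℕ) : ZMod (2 * n))), ?_⟩
      rw [vsum_F_cast hm hn _ _ (by omega)]
      simp only [S]
      norm_num
      omega
    · refine ⟨(⟨0, by omega⟩, ((1 : ℕ) : ZMod (2 * n))), ?_⟩
      rw [vsum_F_cast hm hn _ _ (by omega)]
      simp only [S]
      norm_num
      omega

lemma colors_F (hm : 2 ≤ m) (hn : 2 ≤ n) :
    LocalAntimagic.colors (mCycles m (2 * n)) (F m n) = 3 := by
  rw [LocalAntimagic.colors, range_vsum hm hn]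
  have hnq : n ≤ m * n := Nat.le_mul_of_pos_left n (by omega)
  rw [Set.ncard_insert_of_notMem
      (by simp only [Set.mem_insert_iff, Set.mem_singleton_iff]; push_neg; omega),
    Set.ncard_insert_of_notMem
      (by simp only [Set.mem_singleton_iff]; omega), Set.ncard_singleton]

lemma adj_ne_F (hm : 2 ≤ m) (hn : 2 ≤ n) : ∀ ⦃u v : Fin m × ZMod (2 * n)⦄,
    (mCycles m (2 * n)).Adj u v →
      LocalAntimagic.vsum (mCycles m (2 * n)) (F m n) u
        ≠ LocalAntimagic.vsum (mCycles m (2 * n)) (F m n) v := by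
  haveI : NeZero (2 * n) := ⟨by omega⟩
  have hnq : n ≤ m * n := Nat.le_mul_of_pos_left n (by omega)
  have key : ∀ w z : Fin m × ZMod (2 * n), z.2 = w.2 + 1 →
      LocalAntimagic.vsum (mCycles m (2 * n)) (F m n) w
        ≠ LocalAntimagic.vsum (mCycles m (2 * n)) (F m n) z := by
    intro w z hz
    rw [vsum_F hm hn, vsum_F hm hn, hz, val_add_one]
    have hw : w.2.val < 2 * n := ZMod.val_lt w.2
    unfold S
    split_ifs <;> first | exact False.elim ‹False› | omega
  intro u v huv
  rw [adj_iff] at huv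
  rcases huv.2 with ⟨h1, h2⟩ | ⟨h1, h2⟩
  · exact (key v u h2).symm
  · exact key u v h2

/-! ### Lower bound -/

lemma lower (hm : 2 ≤ m) (hn : 2 ≤ n) (f : Sym2 (Fin m × ZMod (2 * n)) → ℕ)
    (hf : LocalAntimagic.IsLocalAntimagic (mCycles m (2 * n)) f) :
    3 ≤ LocalAntimagic.colors (mCycles m (2 * n)) f := by
  haveI : NeZero (2 * n) := ⟨by omega⟩
  by_contra hc
  push_neg at hc
  obtain ⟨-, hadj⟩ := hf
  set G := mCycles m (2 * n) with hG
  set z : Fin m := ⟨0, by omega⟩ with hzdef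
  -- adjacency along cycle 0
  have adj_t : ∀ t : ℕ, G.Adj (z, (t : ZMod (2 * n))) (z, ((t + 1 : ℕ) : ZMod (2 * n))) := by
    intro t
    have hcast : ((t + 1 : ℕ) : ZMod (2 * n)) = (t : ZMod (2 * n)) + 1 := by push_cast; ring
    rw [hG, adj_iff]
    constructor
    · intro h
      have h2 := congrArg Prod.snd h
      simp only at h2
      rw [hcast] at h2
      exact add_one_ne (by omega) _ h2.symm
    · right
      exact ⟨rfl, hcast⟩
  set a := LocalAntimagic.vsum G f (z, ((0 : ℕ) : ZMod (2 * n))) with ha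
  set b := LocalAntimagic.vsum G f (z, ((1 : ℕ) : ZMod (2 * n))) with hb
  have hab : a ≠ b := by
    have := hadj (adj_t 0)
    simpa [ha, hb] using this
  -- everything is a or b
  have hrange : ∀ v, LocalAntimagic.vsum G f v = a ∨ LocalAntimagic.vsum G f v = b := by
    intro v
    by_contra hv
    push_neg at hv
    have hsub : ({a, b, LocalAntimagic.vsum G f v} : Set ℕ)
        ⊆ Set.range (LocalAntimagic.vsum G f) := by
      rintro x (rfl | rfl | rfl)
      · exact ⟨_, rfl⟩
      · exact ⟨_, rfl⟩
      · exact ⟨_, rfl⟩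
    have h3 : ({a, b, LocalAntimagic.vsum G f v} : Set ℕ).ncard = 3 := by
      rw [Set.ncard_insert_of_notMem (by
          simp only [Set.mem_insert_iff, Set.mem_singleton_iff]
          push_neg
          exact ⟨hab, (hv.1).symm⟩),
        Set.ncard_insert_of_notMem (by
          simp only [Set.mem_singleton_iff]
          exact fun h => hv.2 h.symm), Set.ncard_singleton]
    have hle := Set.ncard_le_ncard hsub (Set.finite_range _)
    rw [h3] at hle
    rw [LocalAntimagic.colors] at hc
    omega
  -- alternation of vertex sums along cycle 0
  have alt : ∀ t : ℕ, LocalAntimagic.vsum G f (z, (t : ZMod (2 * n)))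
      = if t % 2 = 0 then a else b := by
    intro t
    induction t with
    | zero => simp [ha]
    | succ t ih =>
      have hne := hadj (adj_t t)
      rcases hrange (z, ((t + 1 : ℕ) : ZMod (2 * n))) with h | h <;> rw [h] <;> rw [ih] at hne
      · split_ifs at hne ⊢ with h1 h2 h2 <;> first | rfl | omega | exact absurd rfl hne
      · split_ifs at hne ⊢ with h1 h2 h2 <;>
          first | rfl | omega | exact absurd rfl hne | exact absurd rfl (Ne.symm hab)
  -- edge labels along cycle 0
  set g : ℕ → ℕ := fun t => f (E (z, (t : ZMod (2 * n)))) with hg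
  have edge_sum : ∀ t : ℕ, g t + g (t + 1) = (if t % 2 = 0 then b else a) := by
    intro t
    have hv := vsum_eq (m := m) (N := 2 * n) (by omega) f (z, ((t + 1 : ℕ) : ZMod (2 * n)))
    have hsub1 : ((t + 1 : ℕ) : ZMod (2 * n)) - 1 = (t : ZMod (2 * n)) := by
      push_cast; ring
    rw [hsub1] at hv
    have halt := alt (t + 1)
    rw [hG] at halt  -- make sure same form
    rw [hv] at halt
    have hpar : (t + 1) % 2 = 0 ↔ ¬ (t % 2 = 0) := by omega
    rcases Nat.even_or_odd t with he | ho
    · have h0 : t % 2 = 0 := Nat.even_iff.mp he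
      rw [if_pos h0]
      rw [if_neg (by omega)] at halt
      exact halt
    · have h0 : t % 2 = 1 := Nat.odd_iff.mp ho
      rw [if_neg (by omega)]
      rw [if_pos (by omega)] at halt
      exact halt
  -- telescoping
  have key : ∀ u : ℕ, (g (2 * u) : ℤ) = (g 0 : ℤ) + u * ((a : ℤ) - b) := by
    intro u
    induction u with
    | zero => simp
    | succ u ih =>
      have e1 := edge_sum (2 * u)
      rw [if_pos (by omega)] at e1
      have e2 := edge_sum (2 * u + 1)
      rw [if_neg (by omega)] at e2
      have e3 : (2 * (u + 1)) = (2 * u + 1) + 1 := by ring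
      rw [e3]
      push_cast
      have c1 : (g (2 * u) : ℤ) + g (2 * u + 1) = b := by exact_mod_cast e1
      have c2 : (g (2 * u + 1) : ℤ) + g (2 * u + 1 + 1) = a := by exact_mod_cast e2
      push_cast at ih
      linarith
  -- wrap around
  have hwrap : g (2 * n) = g 0 := by
    have : ((2 * n : ℕ) : ZMod (2 * n)) = ((0 : ℕ) : ZMod (2 * n)) := by
      rw [ZMod.natCast_self, Nat.cast_zero]
    rw [hg]
    simp only [this]
  have hfin := key n
  rw [hwrap] at hfin
  have : (n : ℤ) * ((a : ℤ) - b) = 0 := by linarith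
  have hn0 : (n : ℤ) ≠ 0 := by exact_mod_cast (by omega : n ≠ 0)
  have : (a : ℤ) = b := by
    rcases mul_eq_zero.mp this with h | h
    · exact absurd h hn0
    · linarith
  exact hab (by exact_mod_cast this)

end Stmt19

open LocalAntimagic in
/-- For `m ≥ 2` and `n ≥ 2`, `χ_la(m · C_{2n}) = 3`. -/
theorem stmt19 (m n : ℕ) (hm : 2 ≤ m) (hn : 2 ≤ n) :
    chiLA (mCycles m (2 * n)) = 3 := by
  have hmem : 3 ∈ {c | ∃ f : Sym2 (Fin m × ZMod (2 * n)) → ℕ,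
      IsLocalAntimagic (mCycles m (2 * n)) f ∧ colors (mCycles m (2 * n)) f = c} :=
    ⟨Stmt19.F m n, ⟨Stmt19.F_bijOn hm hn, Stmt19.adj_ne_F hm hn⟩, Stmt19.colors_F hm hn⟩
  apply le_antisymm
  · exact Nat.sInf_le hmem
  · apply le_csInf ⟨3, hmem⟩
    rintro c ⟨f, hf, rfl⟩
    exact Stmt19.lower hm hn f hf
end
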